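/- With the trumpet setup below, there exists α₁ > ０ such that for every α ≥ α₁ and every r > 0 one has u_α(r) + (2/(n−2))·r·w(r) > 0. -/

import Mathlib

/-!
Write `u₁ = r^((2-n)/2)` and `c = 2/(n-2)`, so that `c·r·u₁'(r) = -u₁(r)` and
`c·r·u₂'(r) = -2r^(2-n)`. Since `w` is a convex combination of the nonpositive functions `u₁'` and
`u₂'`, the integral `∫_{(r,∞)} w` is nonpositive. For `r ≤ r₀` we have `w = u₁'` on `(r, r₀]`, so
`u_α(r) ≥ α + u₁(r)`, which exactly compensates `c·r·w(r) = -u₁(r)`. For `r > r₀` we only use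
`u_α(r) ≥ α + u₁(r₀)` and `w ≥ u₁' + u₂'`, whence `c·r·w(r) ≥ -u₁(r₀) - 2r₀^(2-n)` by
monotonicity; so `α₁ = 1 + 2r₀^(2-n)` works.
-/

open MeasureTheory

noncomputable def u1' (n : ℕ) (s : ℝ) : ℝ := ((2 - (n : ℝ)) / 2) * s ^ (-(n : ℝ) / 2)

noncomputable def u2' (n : ℕ) (s : ℝ) : ℝ := (2 - (n : ℝ)) * s ^ (1 - (n : ℝ))

noncomputable def w (n : ℕ) (ζ : ℝ → ℝ) (s : ℝ) : ℝ :=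
  ζ s * u1' n s + (1 - ζ s) * u2' n s

noncomputable def uA (n : ℕ) (ζ : ℝ → ℝ) (r₀ α r : ℝ) : ℝ :=
  α + r₀ ^ ((2 - (n : ℝ)) / 2) - ∫ s in Set.Ioi r, w n ζ s

section Trumpet

variable {n : ℕ}

lemma u1'_nonpos (hn : 2 ≤ n) {s : ℝ} (hs : 0 ≤ s) : u1' n s ≤ 0 := by
  have hn' : (2 : ℝ) ≤ n := by exact_mod_cast hn
  exact mul_nonpos_of_nonpos_of_nonneg (by linarith) (Real.rpow_nonneg hs _)

lemma u2'_nonpos (hn : 2 ≤ n) {s : ℝ} (hs : 0 ≤ s) : u2' n s ≤ 0 := by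
  have hn' : (2 : ℝ) ≤ n := by exact_mod_cast hn
  exact mul_nonpos_of_nonpos_of_nonneg (by linarith) (Real.rpow_nonneg hs _)

lemma mul_u1' (hn : n ≠ 2) {r : ℝ} (hr : 0 < r) :
    2 / ((n : ℝ) - 2) * r * u1' n r = -r ^ ((2 - (n : ℝ)) / 2) := by
  have hn' : (n : ℝ) - 2 ≠ 0 := sub_ne_zero.mpr (by exact_mod_cast hn)
  rw [show (2 - (n : ℝ)) / 2 = -(n : ℝ) / 2 + 1 by ring, Real.rpow_add_one hr.ne', u1']
  field_simp
  ring

lemma mul_u2' (hn : n ≠ 2) {r : ℝ} (hr : 0 < r) :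
    2 / ((n : ℝ) - 2) * r * u2' n r = -(2 * r ^ (2 - (n : ℝ))) := by
  have hn' : (n : ℝ) - 2 ≠ 0 := sub_ne_zero.mpr (by exact_mod_cast hn)
  rw [show 2 - (n : ℝ) = 1 - (n : ℝ) + 1 by ring, Real.rpow_add_one hr.ne', u2']
  field_simp
  ring

lemma integral_Ioc_u1' (hn : n ≠ 2) {r r₀ : ℝ} (hr : 0 < r) (hrr₀ : r ≤ r₀) :
    ∫ s in Set.Ioc r r₀, u1' n s = r₀ ^ ((2 - (n : ℝ)) / 2) - r ^ ((2 - (n : ℝ)) / 2) := by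
  have hn' : (n : ℝ) ≠ 2 := by exact_mod_cast hn
  have hexp : -(n : ℝ) / 2 + 1 = (2 - (n : ℝ)) / 2 := by ring
  have hexp_ne : (2 - (n : ℝ)) / 2 ≠ 0 := by
    intro h; apply hn'; linarith
  have h0 : (0 : ℝ) ∉ Set.uIcc r r₀ := by
    rw [Set.uIcc_of_le hrr₀]; exact fun h => hr.not_ge h.1
  rw [← intervalIntegral.integral_of_le hrr₀]
  simp only [u1']
  rw [intervalIntegral.integral_const_mul,
    integral_rpow (Or.inr ⟨fun h => hexp_ne (by linarith), h0⟩), hexp, mul_div_cancel₀ _ hexp_ne]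

lemma integrableOn_Ioi_u1' (hn : 2 < n) {r : ℝ} (hr : 0 < r) :
    IntegrableOn (u1' n) (Set.Ioi r) := by
  have hn' : (2 : ℝ) < n := by exact_mod_cast hn
  exact (integrableOn_Ioi_rpow_of_lt (by linarith) hr).const_mul _

lemma integrableOn_Ioi_u2' (hn : 2 < n) {r : ℝ} (hr : 0 < r) :
    IntegrableOn (u2' n) (Set.Ioi r) := by
  have hn' : (2 : ℝ) < n := by exact_mod_cast hn
  exact (integrableOn_Ioi_rpow_of_lt (by linarith) hr).const_mul _

variable {ζ : ℝ → ℝ}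

lemma w_nonpos (hn : 2 ≤ n) {s : ℝ} (hs : 0 ≤ s) (hζ0 : 0 ≤ ζ s) (hζ1 : ζ s ≤ 1) :
    w n ζ s ≤ 0 := by
  have h1 := u1'_nonpos hn hs
  have h2 := u2'_nonpos hn hs
  unfold w
  nlinarith

lemma u1'_add_u2'_le_w (hn : 2 ≤ n) {s : ℝ} (hs : 0 ≤ s) (hζ0 : 0 ≤ ζ s) (hζ1 : ζ s ≤ 1) :
    u1' n s + u2' n s ≤ w n ζ s := by
  have h1 := u1'_nonpos hn hs
  have h2 := u2'_nonpos hn hs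
  unfold w
  nlinarith

lemma w_eq_u1' {s : ℝ} (hζ : ζ s = 1) : w n ζ s = u1' n s := by
  simp [w, hζ]

lemma setIntegral_Ioi_w_nonpos (hn : 2 ≤ n) (hζ01 : ∀ s, 0 ≤ ζ s ∧ ζ s ≤ 1) {r : ℝ}
    (hr : 0 ≤ r) : ∫ s in Set.Ioi r, w n ζ s ≤ 0 := by
  refine integral_nonpos_of_ae ?_
  filter_upwards [ae_restrict_mem measurableSet_Ioi] with s hs
  exact w_nonpos hn (hr.trans hs.le) (hζ01 s).1 (hζ01 s).2

lemma integrableOn_Ioi_w (hn : 2 < n) (hζ : Measurable ζ) (hζ01 : ∀ s, 0 ≤ ζ s ∧ ζ s ≤ 1)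
    {r : ℝ} (hr : 0 < r) : IntegrableOn (w n ζ) (Set.Ioi r) := by
  have hbound : ∀ s, ‖ζ s‖ ≤ 1 ∧ ‖1 - ζ s‖ ≤ 1 := fun s => by
    obtain ⟨h0, h1⟩ := hζ01 s
    simp only [Real.norm_eq_abs, abs_le]
    constructor <;> constructor <;> linarith
  exact ((integrableOn_Ioi_u1' hn hr).bdd_mul hζ.aestronglyMeasurable
      (.of_forall fun s => (hbound s).1)).add
    ((integrableOn_Ioi_u2' hn hr).bdd_mul (hζ.const_sub 1).aestronglyMeasurable
      (.of_forall fun s => (hbound s).2))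

lemma setIntegral_Ioi_w_of_le (hn : 2 < n) (hζ : Measurable ζ)
    (hζ01 : ∀ s, 0 ≤ ζ s ∧ ζ s ≤ 1) {r₀ : ℝ} (hζone : ∀ s, s ≤ r₀ → ζ s = 1) {r : ℝ}
    (hr : 0 < r) (hrr₀ : r ≤ r₀) :
    ∫ s in Set.Ioi r, w n ζ s
      = r₀ ^ ((2 - (n : ℝ)) / 2) - r ^ ((2 - (n : ℝ)) / 2) + ∫ s in Set.Ioi r₀, w n ζ s := by
  rw [← Set.Ioc_union_Ioi_eq_Ioi hrr₀, setIntegral_union (Set.Ioc_disjoint_Ioi le_rfl)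
    measurableSet_Ioi ((integrableOn_Ioi_w hn hζ hζ01 hr).mono_set Set.Ioc_subset_Ioi_self)
    (integrableOn_Ioi_w hn hζ hζ01 (hr.trans_le hrr₀)),
    setIntegral_congr_fun measurableSet_Ioc fun s hs => w_eq_u1' (hζone s hs.2),
    integral_Ioc_u1' hn.ne' hr hrr₀]

lemma le_uA_add_mul_w_of_le (hn : 2 < n) (hζ : Measurable ζ)
    (hζ01 : ∀ s, 0 ≤ ζ s ∧ ζ s ≤ 1) {r₀ : ℝ} (hr₀ : 0 < r₀) (hζone : ∀ s, s ≤ r₀ → ζ s = 1)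
    (α : ℝ) {r : ℝ} (hr : 0 < r) (hrr₀ : r ≤ r₀) :
    α ≤ uA n ζ r₀ α r + 2 / ((n : ℝ) - 2) * r * w n ζ r := by
  have hI₀ := setIntegral_Ioi_w_nonpos hn.le hζ01 hr₀.le
  rw [uA, setIntegral_Ioi_w_of_le hn hζ hζ01 hζone hr hrr₀, w_eq_u1' (hζone r hrr₀),
    mul_u1' hn.ne' hr]
  linarith

lemma sub_le_uA_add_mul_w_of_lt (hn : 2 < n) (hζ01 : ∀ s, 0 ≤ ζ s ∧ ζ s ≤ 1) {r₀ : ℝ}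
    (hr₀ : 0 < r₀) (α : ℝ) {r : ℝ} (hr₀r : r₀ < r) :
    α - 2 * r₀ ^ (2 - (n : ℝ)) ≤ uA n ζ r₀ α r + 2 / ((n : ℝ) - 2) * r * w n ζ r := by
  have hn' : (2 : ℝ) < n := by exact_mod_cast hn
  have hr : 0 < r := hr₀.trans hr₀r
  have hI := setIntegral_Ioi_w_nonpos hn.le hζ01 hr.le
  have hw := mul_le_mul_of_nonneg_left (u1'_add_u2'_le_w hn.le hr.le (hζ01 r).1 (hζ01 r).2)
    (by positivity : (0 : ℝ) ≤ 2 / ((n : ℝ) - 2) * r)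
  rw [mul_add, mul_u1' hn.ne' hr, mul_u2' hn.ne' hr] at hw
  have h₁ := Real.rpow_le_rpow_of_nonpos hr₀ hr₀r.le (by linarith : (2 - (n : ℝ)) / 2 ≤ 0)
  have h₂ := Real.rpow_le_rpow_of_nonpos hr₀ hr₀r.le (by linarith : 2 - (n : ℝ) ≤ 0)
  rw [uA]
  linarith

end Trumpet

theorem stmt_18_general (n : ℕ) (hn : 3 ≤ n) (r₀ : ℝ) (hr₀ : 0 < r₀)
    (ζ : ℝ → ℝ) (hζC : ContDiff ℝ 1 ζ) (hζ01 : ∀ r : ℝ, 0 ≤ ζ r ∧ ζ r ≤ 1)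
    (hζone : ∀ r : ℝ, r ≤ r₀ → ζ r = 1) :
    ∃ α₁ : ℝ, 0 < α₁ ∧ ∀ α : ℝ, α₁ ≤ α → ∀ r : ℝ, 0 < r →
      uA n ζ r₀ α r + (2 / ((n : ℝ) - 2)) * r * w n ζ r > 0 := by
  have hα₁ : 0 < 1 + 2 * r₀ ^ (2 - (n : ℝ)) := by positivity
  refine ⟨_, hα₁, fun α hα r hr => ?_⟩
  rcases le_or_gt r r₀ with hrr₀ | hr₀r
  · linarith [le_uA_add_mul_w_of_le hn hζC.continuous.measurable hζ01 hr₀ hζone α hr hrr₀]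
  · linarith [sub_le_uA_add_mul_w_of_lt hn hζ01 hr₀ α hr₀r]

theorem stmt_18 (n : ℕ) (hn : 3 ≤ n) (r₀ : ℝ) (hr₀ : 0 < r₀)
    (hr₀2 : 2 * r₀ < (2 : ℝ) ^ ((2 : ℝ) / ((n : ℝ) - 2)))
    (ζ : ℝ → ℝ) (hζC : ContDiff ℝ 1 ζ) (hζ01 : ∀ r : ℝ, 0 ≤ ζ r ∧ ζ r ≤ 1)
    (hζone : ∀ r : ℝ, r ≤ r₀ → ζ r = 1) (hζzero : ∀ r : ℝ, 2 * r₀ ≤ r → ζ r = 0)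
    (hζder : ∀ r : ℝ, deriv ζ r ≤ 0) :
    ∃ α₁ : ℝ, 0 < α₁ ∧ ∀ α : ℝ, α₁ ≤ α → ∀ r : ℝ, 0 < r →
      uA n ζ r₀ α r + (2 / ((n : ℝ) - 2)) * r * w n ζ r > 0 :=
  stmt_18_general n hn r₀ hr₀ ζ hζC hζ01 hζone
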